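/- arXiv:math/0209081 — 6 statements merged into one kernel-verified Lean document; each statement's English description precedes it below -/
import Mathlib

section
/- There is no automatic left-order on the free group on two generators. Precisely: there is no linear order ≤ on the free group F₂ on two generators such that (i) ≤ is left-invariant, i.e. for all a, b, c ∈ F₂, b ≤ c implies a·b ≤ a·c, and (ii) the language consisting of all reduced words, over the four-letter alphabet of the two generators and their formal inverses, that represent an element g with 1 < g, is a regular language. -/
/-!
Suppose a DFA with `n` states accepts the reduced words of the positive cone, and let `m` bound
the finitely many elements spelled by words of length at most `n`. Take `u > m` and a letter `z`
on a generator other than that of the first letter of `u`, with `u < z * u`. Then `u⁻¹ * z * u`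
is positive and its reduced word starts with the word of `u⁻¹`. Pumping down the rest of that
word gives an accepted word spelling `u⁻¹ * t` with `|t| < n`, so `u < t ≤ m < u`.
-/

theorem DFA.exists_length_lt_evalFrom_eq {α σ : Type*} [Fintype σ] (M : DFA α σ) (s : σ)
    (x : List α) : ∃ y : List α, y.length < Fintype.card σ ∧ M.evalFrom s y = M.evalFrom s x := by
  induction hx : x.length using Nat.strong_induction_on generalizing x with
  | _ k ih =>
    by_cases hlt : x.length < Fintype.card σ
    · exact ⟨x, hlt, rfl⟩
    obtain ⟨q, a, b, c, rfl, -, hb, ha, -, hc⟩ := M.evalFrom_split (not_lt.1 hlt) rfl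
    have hshorter : (a ++ c).length < k := by
      have := List.length_pos_of_ne_nil hb
      simp only [← hx, List.length_append]
      omega
    obtain ⟨y, hy, hyac⟩ := ih _ hshorter (a ++ c) rfl
    exact ⟨y, hy, by rw [hyac, evalFrom_of_append, ha, hc]⟩

theorem DFA.exists_append_mem_accepts_length_lt {α σ : Type*} [Fintype σ] {M : DFA α σ}
    {p x : List α} (h : p ++ x ∈ M.accepts) :
    ∃ y : List α, y.length < Fintype.card σ ∧ p ++ y ∈ M.accepts := by
  obtain ⟨y, hy, hyx⟩ := M.exists_length_lt_evalFrom_eq (M.evalFrom M.start p) x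
  refine ⟨y, hy, ?_⟩
  rwa [mem_accepts, eval, evalFrom_of_append, hyx, ← evalFrom_of_append]

theorem lt_mul_or_lt_inv_mul {G : Type*} [Group G] [LinearOrder G] [MulLeftMono G] {a : G}
    (ha : a ≠ 1) (s : G) : s < a * s ∨ s < a⁻¹ * s := by
  by_contra! h
  have : s ≤ a * s := by simpa using mul_le_mul_right h.2 a
  exact ha (mul_eq_right.1 (h.1.antisymm this))

instance {G : Type*} [Group G] [LinearOrder G] [MulLeftMono G] [Nontrivial G] :
    NoMaxOrder G where
  exists_gt s := by
    obtain ⟨a, ha⟩ := exists_ne (1 : G)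
    exact (lt_mul_or_lt_inv_mul ha s).elim (⟨_, ·⟩) (⟨_, ·⟩)

namespace FreeGroup

variable {α : Type*}

theorem IsReduced.invRev {L : List (α × Bool)} (h : IsReduced L) : IsReduced (invRev L) := by
  refine List.isChain_reverse.2 ((List.isChain_map _).2 (h.imp ?_))
  intro a b hab hba
  simpa using (hab hba.symm).symm

theorem IsReduced.cons {z : α × Bool} {L : List (α × Bool)} (hL : IsReduced L)
    (hz : ∀ x ∈ L.head?, x.1 ≠ z.1) : IsReduced (z :: L) :=
  List.isChain_cons.2 ⟨fun x hx hzx => absurd hzx.symm (hz x hx), hL⟩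

theorem isReduced_invRev_append_cons {z : α × Bool} {L : List (α × Bool)} (hL : IsReduced L)
    (hz : ∀ x ∈ L.head?, x.1 ≠ z.1) : IsReduced (invRev L ++ z :: L) := by
  have hz' : IsReduced (invRev ((z.1, !z.2) :: L)) :=
    (hL.cons (z := (z.1, !z.2)) hz).invRev
  rw [invRev_cons] at hz'
  simpa [invRev] using hz'.append_overlap (hL.cons hz) (List.cons_ne_nil _ _)

theorem mk_invRev_append_cons (z : α × Bool) (L : List (α × Bool)) :
    mk (invRev L ++ z :: L) = (mk L)⁻¹ * (mk [z] * mk L) := by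
  rw [inv_mk, mul_mk, mul_mk]; rfl

variable [LinearOrder (FreeGroup α)] [MulLeftMono (FreeGroup α)]

theorem exists_lt_mk_singleton_mul (j : α) (s : FreeGroup α) : ∃ b, s < mk [(j, b)] * s := by
  rcases lt_mul_or_lt_inv_mul (of_ne_one j) s with h | h
  · exact ⟨true, h⟩
  · exact ⟨false, h⟩

theorem not_isRegular_positiveCone_words [DecidableEq α] [Finite α] [Nontrivial α] :
    ¬ Language.IsRegular {w : List (α × Bool) | reduce w = w ∧ 1 < mk w} := by
  rintro ⟨σ, _, M, hM⟩
  obtain ⟨m, hm⟩ : BddAbove (mk '' {t : List (α × Bool) | t.length ≤ Fintype.card σ}) :=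
    ((List.finite_length_le _ _).image mk).bddAbove
  obtain ⟨u, hmu⟩ := exists_gt m
  have hm_one : 1 ≤ m := hm ⟨[], by simp, rfl⟩
  have hu : u.toWord ≠ [] := by simpa using (hm_one.trans_lt hmu).ne'
  obtain ⟨x, w, huw⟩ := List.exists_cons_of_ne_nil hu
  obtain ⟨j, hj⟩ := exists_ne x.1
  obtain ⟨b, hb⟩ := exists_lt_mk_singleton_mul j u
  have hconj : invRev u.toWord ++ (j, b) :: u.toWord ∈ M.accepts := by
    rw [hM]
    refine ⟨(isReduced_invRev_append_cons isReduced_toWord ?_).reduce_eq, ?_⟩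
    · simpa [huw] using hj.symm
    · rwa [mk_invRev_append_cons, mk_toWord, lt_inv_mul_iff_lt]
  obtain ⟨t, ht, hacc⟩ := DFA.exists_append_mem_accepts_length_lt hconj
  rw [hM] at hacc
  have hut : u < mk t := by
    rw [← lt_inv_mul_iff_lt, ← mk_toWord (x := u), inv_mk, mul_mk]
    exact hacc.2
  exact (hm ⟨t, ht.le, rfl⟩).not_gt (hmu.trans hut)

end FreeGroup

/-- There is no automatic left-order on the free group `F₂` on two generators:
there is no linear order on `FreeGroup (Fin 2)` that is left-invariant and such
that the language of reduced words (over the alphabet `Fin 2 × Bool` of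
generators and their formal inverses) representing a positive element is a
regular language. -/
theorem no_automatic_left_order_on_free_group_two :
    ¬ ∃ lo : LinearOrder (FreeGroup (Fin 2)),
        (∀ a b c : FreeGroup (Fin 2), lo.le b c → lo.le (a * b) (a * c)) ∧
        Language.IsRegular
          {w : List (Fin 2 × Bool) |
            FreeGroup.reduce w = w ∧ lo.lt 1 (FreeGroup.mk w)} := by
  rintro ⟨lo, hmul, hreg⟩
  let _ := lo
  have : MulLeftMono (FreeGroup (Fin 2)) := ⟨fun a _ _ h => hmul a _ _ h⟩
  exact FreeGroup.not_isRegular_positiveCone_words hreg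
end

section
/- Let G be a group, let ρ : G → (order-preserving bijections of ℝ) be a group homomorphism, and let x₀ ∈ ℝ be a point whose stabilizer is trivial, i.e. ρ(g)(x₀) = x₀ implies g = 1. Then the relation defined by g ≤ h if and only if ρ(g)(x₀) ≤ ρ(h)(x₀) is a left-invariant linear order on G, and its positive cone is exactly {g ∈ G : ρ(g)(x₀) > x₀}. -/
/-- If `ρ : G → Homeo⁺(ℝ)` is an action and `x₀` has trivial stabilizer, then
`g ≤ h ↔ ρ(g)(x₀) ≤ ρ(h)(x₀)` defines a left-invariant linear order on `G`
whose positive cone is `{g | ρ(g)(x₀) > x₀}`. -/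
theorem left_invariant_order_from_point_with_trivial_stabilizer
    {G : Type*} [Group G] (ρ : G →* (ℝ ≃o ℝ)) (x₀ : ℝ)
    (hstab : ∀ g : G, ρ g x₀ = x₀ → g = 1) :
    IsLinearOrder G (fun g h : G => ρ g x₀ ≤ ρ h x₀) ∧
    (∀ a b c : G, ρ b x₀ ≤ ρ c x₀ → ρ (a * b) x₀ ≤ ρ (a * c) x₀) ∧
    {g : G | ρ (1 : G) x₀ ≤ ρ g x₀ ∧ ¬ ρ g x₀ ≤ ρ (1 : G) x₀} =
      {g : G | x₀ < ρ g x₀} := by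
  have hmul : ∀ g h : G, ρ (g * h) x₀ = ρ g (ρ h x₀) := by
    intro g h; rw [map_mul]; rfl
  have hone : ρ (1 : G) x₀ = x₀ := by rw [map_one]; rfl
  refine ⟨?_, ?_, ?_⟩
  · exact
      { refl := fun g => le_refl _
        trans := fun a b c hab hbc => le_trans hab hbc
        antisymm := fun a b hab hba => by
          have h : ρ a x₀ = ρ b x₀ := le_antisymm hab hba
          have h2 : ρ (b⁻¹ * a) x₀ = x₀ := by
            rw [hmul, h, ← hmul, inv_mul_cancel, hone]
          have := hstab _ h2
          calc a = b * (b⁻¹ * a) := by group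
            _ = b := by rw [this, mul_one]
        total := fun a b => le_total _ _ }
  · intro a b c h
    rw [hmul, hmul]
    exact (ρ a).le_iff_le.mpr h
  · ext g
    simp only [Set.mem_setOf_eq, hone, not_le]
    exact ⟨fun ⟨h1, h2⟩ => h2, fun h => ⟨h.le, h⟩⟩
end

section
/- A countable group G admits a left-invariant linear order if and only if there exists an injective group homomorphism from G into the group of order-preserving bijections of ℝ. -/
/-!
A left-invariant order on `G` lets `G` act faithfully on `G ×ₗ ℚ` by left multiplication on the
first factor. For countable `G` this is a countable dense linear order without endpoints, hence
isomorphic to `ℚ` (Cantor), and every order automorphism of `ℚ` extends to one of `ℝ` through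
suprema: the extension is monotone with dense range, hence continuous, which makes it
multiplicative. Conversely, an order automorphism of `ℝ` is determined by its values on an
enumeration `(qₙ)` of `ℚ`; comparing these value sequences lexicographically is a left-invariant
order on `ℝ ≃o ℝ`, which restricts to any subgroup.
-/

open Function

theorem eq_of_forall_ratCast_eq {f g : ℝ → ℝ} (hf : Continuous f) (hg : Continuous g)
    (h : ∀ q : ℚ, f q = g q) : f = g :=
  hf.ext_on Rat.denseRange_cast hg (by rintro _ ⟨q, rfl⟩; exact h q)

namespace OrderIso

variable {α β : Type*} [Preorder α] [Preorder β]

def autCongr (e : α ≃o β) : (α ≃o α) ≃* (β ≃o β) where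
  toFun f := e.symm.trans (f.trans e)
  invFun g := e.trans (g.trans e.symm)
  left_inv f := by ext; simp
  right_inv g := by ext; simp
  map_mul' f g := by ext; simp [RelIso.mul_apply]

noncomputable def ratExtendFun (φ : ℚ ≃o ℚ) (x : ℝ) : ℝ :=
  sSup ((fun q : ℚ => (φ q : ℝ)) '' {q : ℚ | (q : ℝ) < x})

variable (φ ψ : ℚ ≃o ℚ)

lemma ratExtendFun_set_nonempty (x : ℝ) :
    ((fun q : ℚ => (φ q : ℝ)) '' {q : ℚ | (q : ℝ) < x}).Nonempty :=
  let ⟨q, hq⟩ := exists_rat_lt x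
  ⟨_, q, hq, rfl⟩

lemma ratExtendFun_le_of_le {x : ℝ} {r : ℚ} (h : x ≤ r) : ratExtendFun φ x ≤ φ r := by
  refine csSup_le (ratExtendFun_set_nonempty φ x) ?_
  rintro _ ⟨q, hq, rfl⟩
  exact Rat.cast_le.2 (φ.monotone (by exact_mod_cast (hq.trans_le h).le))

lemma ratExtendFun_set_bddAbove (x : ℝ) :
    BddAbove ((fun q : ℚ => (φ q : ℝ)) '' {q : ℚ | (q : ℝ) < x}) := by
  obtain ⟨r, hr⟩ := exists_rat_gt x
  refine ⟨φ r, ?_⟩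
  rintro _ ⟨q, hq, rfl⟩
  exact Rat.cast_le.2 (φ.monotone (by exact_mod_cast (hq.trans hr).le))

lemma le_ratExtendFun {x : ℝ} {q : ℚ} (h : (q : ℝ) < x) : (φ q : ℝ) ≤ ratExtendFun φ x :=
  le_csSup (ratExtendFun_set_bddAbove φ x) ⟨q, h, rfl⟩

lemma ratExtendFun_monotone : Monotone (ratExtendFun φ) := fun _ y hxy =>
  csSup_le_csSup (ratExtendFun_set_bddAbove φ y) (ratExtendFun_set_nonempty φ _)
    (Set.image_mono fun _ hq => lt_of_lt_of_le hq hxy)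

@[simp]
lemma ratExtendFun_ratCast (q : ℚ) : ratExtendFun φ q = φ q := by
  refine le_antisymm (ratExtendFun_le_of_le φ le_rfl) (le_of_forall_lt fun z hz => ?_)
  obtain ⟨r, hzr, hrq⟩ := exists_rat_btwn hz
  have hr : φ.symm r < q := φ.symm_apply_lt.2 (by exact_mod_cast hrq)
  have := le_ratExtendFun φ (Rat.cast_lt.2 hr)
  rw [apply_symm_apply] at this
  exact hzr.trans_le this

lemma ratExtendFun_continuous : Continuous (ratExtendFun φ) := by
  refine (ratExtendFun_monotone φ).continuous_of_denseRange (Rat.denseRange_cast.mono ?_)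
  rintro _ ⟨q, rfl⟩
  exact ⟨φ.symm q, by simp⟩

lemma ratExtendFun_mul : ratExtendFun (φ * ψ) = ratExtendFun φ ∘ ratExtendFun ψ :=
  eq_of_forall_ratCast_eq (ratExtendFun_continuous _)
    ((ratExtendFun_continuous φ).comp (ratExtendFun_continuous ψ)) fun q => by
      simp [RelIso.mul_apply]

lemma ratExtendFun_one : ratExtendFun 1 = id :=
  eq_of_forall_ratCast_eq (ratExtendFun_continuous _) continuous_id fun q => by
    simp [RelIso.one_apply]

lemma ratExtendFun_inv_comp : ratExtendFun φ⁻¹ ∘ ratExtendFun φ = id := by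
  rw [← ratExtendFun_mul, inv_mul_cancel, ratExtendFun_one]

noncomputable def ratExtend : (ℚ ≃o ℚ) →* (ℝ ≃o ℝ) where
  toFun φ := Equiv.toOrderIso
    ⟨ratExtendFun φ, ratExtendFun φ⁻¹, leftInverse_iff_comp.2 (ratExtendFun_inv_comp φ),
      leftInverse_iff_comp.2 (by simpa using ratExtendFun_inv_comp φ⁻¹)⟩
    (ratExtendFun_monotone φ) (ratExtendFun_monotone φ⁻¹)
  map_one' := by ext; simp [ratExtendFun_one]
  map_mul' φ ψ := by ext; simp [ratExtendFun_mul, RelIso.mul_apply]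

@[simp]
lemma ratExtend_apply (x : ℝ) : ratExtend φ x = ratExtendFun φ x := rfl

lemma ratExtend_injective : Injective ratExtend := fun φ ψ h =>
  ext <| funext fun q => by simpa using congrArg (fun f : ℝ ≃o ℝ => f q) h

end OrderIso

def IsLeftOrderable (G : Type*) [Mul G] : Prop :=
  ∃ lo : LinearOrder G, ∀ a b c : G, lo.le b c → lo.le (a * b) (a * c)

lemma IsLeftOrderable.of_injective {G H : Type*} [Mul G] [Mul H] (h : IsLeftOrderable H)
    (f : G →ₙ* H) (hf : Injective f) : IsLeftOrderable G := by
  obtain ⟨lo, hlo⟩ := h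
  refine ⟨LinearOrder.lift' f hf, fun a b c hbc => ?_⟩
  change lo.le (f (a * b)) (f (a * c))
  rw [map_mul, map_mul]
  exact hlo _ _ _ hbc

lemma Pi.toLex_comp_lt_toLex_comp {ι α β : Type*} [LinearOrder ι] [Preorder α] [Preorder β]
    {g : α → β} (hg : StrictMono g) {x y : ι → α} (h : toLex x < toLex y) :
    toLex (g ∘ x) < toLex (g ∘ y) :=
  let ⟨i, hj, hi⟩ := h
  ⟨i, fun j hji => congrArg g (hj j hji), hg hi⟩

lemma OrderIso.isLeftOrderable_of_injective_restrict {α ι : Type*} [LinearOrder α]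
    [LinearOrder ι] [WellFoundedLT ι] (u : ι → α)
    (hu : Injective fun f : α ≃o α => toLex (f ∘ u)) : IsLeftOrderable (α ≃o α) := by
  let := LinearOrder.lift' _ hu
  refine ⟨this, fun a b c hbc => ?_⟩
  rcases hbc.lt_or_eq with hlt | heq
  · exact (Pi.toLex_comp_lt_toLex_comp a.strictMono hlt).le
  · rw [heq]

lemma OrderIso.isLeftOrderable_real : IsLeftOrderable (ℝ ≃o ℝ) := by
  obtain ⟨u, hu⟩ := exists_surjective_nat ℚ
  refine isLeftOrderable_of_injective_restrict (fun n => (u n : ℝ)) fun f g hfg => ?_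
  refine ext (eq_of_forall_ratCast_eq f.continuous g.continuous fun q => ?_)
  obtain ⟨n, rfl⟩ := hu q
  exact congrFun hfg n

section LeftOrdered

variable (G α : Type*) [Group G] [LinearOrder G] [MulLeftMono G] [Preorder α]

def mulLeftLex : G →* (G ×ₗ α ≃o G ×ₗ α) where
  toFun a :=
    { toFun p := toLex (a * (ofLex p).1, (ofLex p).2)
      invFun p := toLex (a⁻¹ * (ofLex p).1, (ofLex p).2)
      left_inv p := by simp
      right_inv p := by simp
      map_rel_iff' := by simp [Prod.Lex.le_iff] }
  map_one' := by ext; simp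
  map_mul' a b := by ext; simp [RelIso.mul_apply, mul_assoc]

@[simp]
lemma mulLeftLex_apply (a : G) (p : G ×ₗ α) :
    mulLeftLex G α a p = toLex (a * (ofLex p).1, (ofLex p).2) := rfl

lemma mulLeftLex_injective [Nonempty α] : Injective (mulLeftLex G α) := by
  refine (injective_iff_map_eq_one _).2 fun a ha => ?_
  obtain ⟨x⟩ := ‹Nonempty α›
  simpa using congrArg (fun p => (ofLex p).1) (DFunLike.congr_fun ha (toLex (1, x)))

end LeftOrdered

lemma IsLeftOrderable.exists_injective_orderIso_rat {G : Type*} [Group G] [Countable G]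
    (h : IsLeftOrderable G) : ∃ ρ : G →* (ℚ ≃o ℚ), Injective ρ := by
  obtain ⟨lo, hlo⟩ := h
  have : MulLeftMono G := ⟨fun a _ _ => hlo a _ _⟩
  have : Countable (G ×ₗ ℚ) := inferInstanceAs (Countable (G × ℚ))
  obtain ⟨e⟩ := Order.iso_of_countable_dense (G ×ₗ ℚ) ℚ
  exact ⟨e.autCongr.toMonoidHom.comp (mulLeftLex G ℚ),
    e.autCongr.injective.comp (mulLeftLex_injective G ℚ)⟩

/-- A countable group admits a left-invariant linear order if and only if it
embeds into the group of order-preserving bijections of `ℝ`. -/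
theorem countable_group_left_orderable_iff_embeds_in_orderIso_real
    (G : Type*) [Group G] [Countable G] :
    (∃ lo : LinearOrder G, ∀ a b c : G, lo.le b c → lo.le (a * b) (a * c)) ↔
    ∃ ρ : G →* (ℝ ≃o ℝ), Function.Injective ρ := by
  constructor
  · intro h
    obtain ⟨ρ, hρ⟩ := IsLeftOrderable.exists_injective_orderIso_rat (G := G) h
    exact ⟨OrderIso.ratExtend.comp ρ, OrderIso.ratExtend_injective.comp hρ⟩
  · rintro ⟨ρ, hρ⟩
    exact OrderIso.isLeftOrderable_real.of_injective ρ.toMulHom hρ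
end

section
/- Let w and v be order-preserving bijections of ℝ. Suppose p < 0 < p′, w(p) = p, w(p′) = p′, and w(t) > t for all t ∈ (p, p′). Suppose q ∈ (p, p′) satisfies v(q) = p′ and v(t) < 0 for all t ∈ (p, q). Then for every s ∈ (p, p′) there exists N ∈ ℕ such that (w⁻ⁿ ∘ v ∘ wⁿ)(s) < 0 for all natural numbers n < N, and (w⁻ⁿ ∘ v ∘ wⁿ)(s) > 0 for all n ≥ N. -/
open Set

/-- Under the stated hypotheses on the order-preserving bijections `w`, `v`
of `ℝ`, for every `s ∈ (p, p')` there is a threshold `N` such that the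
conjugate `w⁻ⁿ ∘ v ∘ wⁿ` moves `s` to a negative point for all `n < N` and to
a positive point for all `n ≥ N`. -/
theorem conjugates_threshold_sign_change
    (w v : ℝ ≃o ℝ) (p p' q : ℝ)
    (hp : p < 0) (hp' : 0 < p')
    (hwp : w p = p) (hwp' : w p' = p')
    (hmove : ∀ t ∈ Ioo p p', t < w t)
    (hq : q ∈ Ioo p p') (hvq : v q = p')
    (hv : ∀ t ∈ Ioo p q, v t < 0) :
    ∀ s ∈ Ioo p p', ∃ N : ℕ,
      (∀ n < N, (⇑w.symm)^[n] (v ((⇑w)^[n] s)) < 0) ∧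
      (∀ n ≥ N, 0 < (⇑w.symm)^[n] (v ((⇑w)^[n] s))) := by
  intro s hs
  have hsymm_p : w.symm p = p := w.symm_apply_eq.mpr hwp.symm
  have hsymm_p' : w.symm p' = p' := w.symm_apply_eq.mpr hwp'.symm
  -- w maps Ioo p p' into itself
  have hwmem : ∀ t ∈ Ioo p p', w t ∈ Ioo p p' := by
    intro t ht
    exact ⟨by rw [← hwp]; exact w.strictMono ht.1, by rw [← hwp']; exact w.strictMono ht.2⟩
  set a : ℕ → ℝ := fun n => (⇑w)^[n] s with ha
  have hmem : ∀ n, a n ∈ Ioo p p' := by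
    intro n
    induction n with
    | zero => exact hs
    | succ n ih =>
      have : a (n + 1) = w (a n) := by
        simp only [ha, Function.iterate_succ_apply']
      rw [this]; exact hwmem _ ih
  have hstep : ∀ n, a n < a (n + 1) := by
    intro n
    have : a (n + 1) = w (a n) := by
      simp only [ha, Function.iterate_succ_apply']
    rw [this]; exact hmove _ (hmem n)
  have hmono : Monotone a := monotone_nat_of_le_succ fun n => (hstep n).le
  -- existence of n with q ≤ a n
  have hex : ∃ n, q ≤ a n := by
    by_contra h
    push_neg at h
    have hbdd : BddAbove (Set.range a) := ⟨q, by rintro x ⟨n, rfl⟩; exact (h n).le⟩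
    set L := ⨆ n, a n with hL
    have htend : Filter.Tendsto a Filter.atTop (nhds L) :=
      tendsto_atTop_ciSup hmono hbdd
    have htend' : Filter.Tendsto (fun n => a (n + 1)) Filter.atTop (nhds L) :=
      htend.comp (Filter.tendsto_add_atTop_nat 1)
    have hcont : Continuous (⇑w) := (w.toHomeomorph).continuous
    have htend'' : Filter.Tendsto (fun n => w (a n)) Filter.atTop (nhds (w L)) :=
      (hcont.tendsto L).comp htend
    have heq : (fun n => a (n + 1)) = fun n => w (a n) := by
      funext n; simp only [ha, Function.iterate_succ_apply']
    rw [heq] at htend'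
    have hwL : w L = L := tendsto_nhds_unique htend'' htend'
    have hLmem : L ∈ Ioo p p' := by
      constructor
      · exact lt_of_lt_of_le (hmem 0).1 (le_ciSup hbdd 0)
      · exact lt_of_le_of_lt (ciSup_le fun n => (h n).le) hq.2
    exact absurd hwL (ne_of_gt (hmove L hLmem))
  set N := Nat.find hex with hN
  refine ⟨N, ?_, ?_⟩
  · -- n < N : a n < q, v (a n) < 0, and w.symm preserves negativity
    have hneg : ∀ x : ℝ, x < 0 → w.symm x < 0 := by
      intro x hx
      rcases le_or_gt x p with h | h
      · calc w.symm x ≤ w.symm p := w.symm.monotone h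
          _ = p := hsymm_p
          _ < 0 := hp
      · have hx' : x ∈ Ioo p p' := ⟨h, hx.trans hp'⟩
        have hmem' : w.symm x ∈ Ioo p p' := by
          constructor
          · rw [← hsymm_p]; exact w.symm.strictMono hx'.1
          · rw [← hsymm_p']; exact w.symm.strictMono hx'.2
        have := hmove _ hmem'
        rw [w.apply_symm_apply] at this
        exact this.trans hx
    have hnegiter : ∀ k : ℕ, ∀ x : ℝ, x < 0 → (⇑w.symm)^[k] x < 0 := by
      intro k
      induction k with
      | zero => intro x hx; simpa using hx
      | succ k ih =>
        intro x hx
        rw [Function.iterate_succ_apply]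
        exact ih _ (hneg x hx)
    intro n hn
    have hlt : a n < q := lt_of_not_ge (Nat.find_min hex hn)
    have : v (a n) < 0 := hv _ ⟨(hmem n).1, hlt⟩
    exact hnegiter n _ this
  · -- n ≥ N : q ≤ a n, v (a n) ≥ p', w.symm^[n] p' = p'
    have hiterp' : ∀ k : ℕ, (⇑w.symm)^[k] p' = p' := by
      intro k
      induction k with
      | zero => rfl
      | succ k ih => rw [Function.iterate_succ_apply, hsymm_p', ih]
    intro n hn
    have hqn : q ≤ a n := le_trans (Nat.find_spec hex) (hmono hn)
    have hvn : p' ≤ v (a n) := by rw [← hvq]; exact v.monotone hqn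
    calc (0 : ℝ) < p' := hp'
      _ = (⇑w.symm)^[n] p' := (hiterp' n).symm
      _ ≤ (⇑w.symm)^[n] (v (a n)) := (w.symm.monotone.iterate n) hvn
end

section
/- Let w and v be order-preserving bijections of ℝ. Suppose p < 0 < p′, w(p) = p, w(p′) = p′, and w(t) > t for all t ∈ (p, p′). Suppose q ∈ (p, p′) satisfies v(t) < 0 for all t ∈ (p, q). Then for every M ∈ ℕ there exists s ∈ (p, q) such that (w⁻ⁿ ∘ v ∘ wⁿ)(s) < 0 for all natural numbers n ≤ M; that is, the threshold before which the conjugates w⁻ⁿ ∘ v ∘ wⁿ move s to a negative point can be made arbitrarily large by choosing s sufficiently close to p. -/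
open Set

/-- Under the stated hypotheses on the order-preserving bijections `w`, `v` of
`ℝ`, the threshold before which the conjugates `w⁻ⁿ ∘ v ∘ wⁿ` move a point `s`
to a negative point can be made arbitrarily large by choosing `s ∈ (p, q)`
sufficiently close to `p`. -/
theorem conjugates_threshold_arbitrarily_large
    (w v : ℝ ≃o ℝ) (p p' q : ℝ)
    (hp : p < 0) (hp' : 0 < p')
    (hwp : w p = p) (hwp' : w p' = p')
    (hmove : ∀ t ∈ Ioo p p', t < w t)
    (hq : q ∈ Ioo p p')
    (hv : ∀ t ∈ Ioo p q, v t < 0) :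
    ∀ M : ℕ, ∃ s ∈ Ioo p q,
      ∀ n ≤ M, (⇑w.symm)^[n] (v ((⇑w)^[n] s)) < 0 := by
  intro M
  obtain ⟨hq1, hq2⟩ := hq
  set q' : ℝ := (p + q) / 2 with hq'def
  have hpq' : p < q' := by simp only [hq'def]; linarith
  have hq'q : q' < q := by simp only [hq'def]; linarith
  have hq'p' : q' < p' := lt_trans hq'q hq2
  have hwsp : w.symm p = p := by
    conv_lhs => rw [← hwp]
    exact w.symm_apply_apply p
  have hwsp' : w.symm p' = p' := by
    conv_lhs => rw [← hwp']
    exact w.symm_apply_apply p'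
  -- w.symm contracts points of (p, p') strictly, staying above p
  have hcontract : ∀ x, p < x → x < p' → p < w.symm x ∧ w.symm x < x := by
    intro x hx1 hx2
    have h1 : p < w.symm x := by
      rw [← hwsp]; exact w.symm.strictMono hx1
    have h2 : w.symm x < p' := by
      rw [← hwsp']; exact w.symm.strictMono hx2
    have h3 := hmove (w.symm x) ⟨h1, h2⟩
    rw [w.apply_symm_apply] at h3
    exact ⟨h1, h3⟩
  -- w.symm preserves negativity
  have hneg : ∀ x : ℝ, x < 0 → w.symm x < 0 := by
    intro x hx
    rcases le_or_gt x p with h | h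
    · calc w.symm x ≤ w.symm p := w.symm.monotone h
        _ = p := hwsp
        _ < 0 := hp
    · exact lt_trans (hcontract x h (lt_trans hx hp')).2 hx
  have hnegk : ∀ k : ℕ, ∀ x : ℝ, x < 0 → (⇑w.symm)^[k] x < 0 := by
    intro k
    induction k with
    | zero => intro x hx; simpa using hx
    | succ k ih =>
      intro x hx
      rw [Function.iterate_succ_apply]
      exact ih _ (hneg x hx)
  -- iterates of w.symm starting at q' stay in (p, q']
  have hCk : ∀ k : ℕ, (⇑w.symm)^[k] q' ∈ Ioc p q' := by
    intro k
    induction k with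
    | zero => exact ⟨hpq', le_refl _⟩
    | succ k ih =>
      rw [Function.iterate_succ_apply']
      obtain ⟨ih1, ih2⟩ := ih
      have := hcontract _ ih1 (lt_of_le_of_lt ih2 hq'p')
      exact ⟨this.1, le_of_lt (lt_of_lt_of_le this.2 ih2)⟩
  refine ⟨(⇑w.symm)^[M] q', ⟨(hCk M).1, lt_of_le_of_lt (hCk M).2 hq'q⟩, ?_⟩
  intro n hn
  have hsplit : (⇑w)^[n] ((⇑w.symm)^[M] q') = (⇑w.symm)^[M - n] q' := by
    have hM : (⇑w.symm)^[M] q' = (⇑w.symm)^[n] ((⇑w.symm)^[M - n] q') := by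
      rw [← Function.iterate_add_apply, Nat.add_sub_cancel' hn]
    rw [hM]
    exact (Function.LeftInverse.iterate w.apply_symm_apply n) _
  rw [hsplit]
  have hmem := hCk (M - n)
  have hvneg : v ((⇑w.symm)^[M - n] q') < 0 :=
    hv _ ⟨hmem.1, lt_of_le_of_lt hmem.2 hq'q⟩
  exact hnegk n _ hvneg
end

section
/- For every positive integer n there is an automatic left-order on ℤⁿ. Precisely: there exists a linear order ≤ on ℤⁿ that is translation-invariant (b ≤ c implies a + b ≤ a + c for all a, b, c ∈ ℤⁿ) — for example the lexicographic order — such that the language of geodesic words representing positive elements is regular, where: words are over the alphabet of 2n letters consisting of the standard basis vectors e₁, …, eₙ and their negatives; a word is geodesic if for no index i it contains both the letter eᵢ and the letter −eᵢ; a word represents the element of ℤⁿ obtained by summing its letters; and the language {geodesic words w : the element represented by w is > 0 in the order ≤} is accepted by a deterministic finite automaton with finitely many states. -/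
/-- The value in `ℤⁿ` of a letter of the alphabet `Fin n × Bool`: the letter
`(i, true)` is the standard basis vector `eᵢ` and `(i, false)` is `-eᵢ`. -/
def letterValue {n : ℕ} (l : Fin n × Bool) : Fin n → ℤ :=
  if l.2 then Pi.single l.1 1 else Pi.single l.1 (-1)

/-- The element of `ℤⁿ` represented by a word: the sum of the values of its
letters. -/
def wordValue {n : ℕ} (w : List (Fin n × Bool)) : Fin n → ℤ :=
  (w.map letterValue).sum

/-- A word over the alphabet `{e₁, …, eₙ, -e₁, …, -eₙ}` is geodesic iff for no
index `i` it contains both the letter `eᵢ` and the letter `-eᵢ`. -/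
def IsGeodesicWord {n : ℕ} (w : List (Fin n × Bool)) : Prop :=
  ∀ i : Fin n, ¬ ((i, true) ∈ w ∧ (i, false) ∈ w)

/-!
Take the lexicographic order. In a geodesic word only one of the letters `eᵢ`, `-eᵢ` can occur,
so the sign of the `i`-th coordinate of the represented vector is determined by which of them
occurs. Lexicographic positivity depends only on these signs, so whether a geodesic word
represents a positive element depends only on the set of letters it contains, and a DFA whose
state is the set of letters read so far recognises the language.
-/

namespace DFA

variable {α : Type*} [DecidableEq α]

def lettersSeen (A : Set (Finset α)) : DFA α (Finset α) where
  step s a := insert a s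
  start := ∅
  accept := A

theorem lettersSeen_evalFrom (A : Set (Finset α)) (s : Finset α) (w : List α) :
    (lettersSeen A).evalFrom s w = s ∪ w.toFinset := by
  induction w generalizing s with
  | nil => simp
  | cons a w ih =>
    rw [evalFrom_cons, ih, List.toFinset_cons]
    exact (Finset.insert_union ..).trans (Finset.union_insert ..).symm

theorem mem_lettersSeen_accepts {A : Set (Finset α)} {w : List α} :
    w ∈ (lettersSeen A).accepts ↔ w.toFinset ∈ A := by
  rw [mem_accepts, eval, lettersSeen_evalFrom]
  exact iff_of_eq (congrArg (· ∈ A) (Finset.empty_union _))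

end DFA

theorem Language.isRegular_of_toFinset_eq {α : Type*} [Fintype α] [DecidableEq α]
    {L : Language α} (hL : ∀ v w : List α, v.toFinset = w.toFinset → v ∈ L → w ∈ L) :
    L.IsRegular := by
  refine isRegular_iff.mpr ⟨Finset α, inferInstance, DFA.lettersSeen (List.toFinset '' L), ?_⟩
  ext w
  rw [DFA.mem_lettersSeen_accepts]
  exact ⟨fun ⟨v, hv, hvw⟩ => hL v w hvw hv, fun hw => ⟨w, hw, rfl⟩⟩

theorem Pi.Lex.toLex_pos_of_sign_eq {ι β : Type*} [LT ι] [Zero β] [LinearOrder β]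
    {x y : ι → β} (h : ∀ i, SignType.sign (x i) = SignType.sign (y i)) (hx : 0 < toLex x) :
    0 < toLex y := by
  obtain ⟨i, hzero, hpos⟩ := hx
  refine ⟨i, fun j hj => ?_, ?_⟩
  · have hxj : x j = 0 := (hzero j hj).symm
    exact (sign_eq_zero_iff.mp ((h j).symm.trans (sign_eq_zero_iff.mpr hxj))).symm
  · exact sign_eq_one_iff.mp ((h i).symm.trans (sign_eq_one_iff.mpr hpos))

section Words

variable {n : ℕ}

theorem wordValue_apply (w : List (Fin n × Bool)) (i : Fin n) :
    wordValue w i = (w.count (i, true) : ℤ) - w.count (i, false) := by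
  induction w with
  | nil => simp [wordValue]
  | cons l w ih =>
    obtain ⟨j, b⟩ := l
    simp only [wordValue, List.map_cons, List.sum_cons, Pi.add_apply] at ih ⊢
    rw [ih]
    rcases b <;> simp [letterValue, List.count_cons, Pi.single_apply, eq_comm (a := i)] <;>
      split_ifs <;> ring

theorem IsGeodesicWord.sign_wordValue {w : List (Fin n × Bool)} (hw : IsGeodesicWord w)
    (i : Fin n) :
    SignType.sign (wordValue w i) =
      if (i, true) ∈ w then 1 else if (i, false) ∈ w then -1 else 0 := by
  rw [wordValue_apply]
  split_ifs with hpos hneg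
  · have := List.count_pos_iff.mpr hpos
    rw [List.count_eq_zero.mpr fun hfalse => hw i ⟨hpos, hfalse⟩]
    exact sign_pos (by omega)
  · have := List.count_pos_iff.mpr hneg
    rw [List.count_eq_zero.mpr hpos]
    exact sign_neg (by omega)
  · simp [List.count_eq_zero.mpr hpos, List.count_eq_zero.mpr hneg]

end Words

theorem exists_automatic_left_order_on_Zn_general (n : ℕ) :
    ∃ lo : LinearOrder (Fin n → ℤ),
      (∀ a b c : Fin n → ℤ, lo.le b c → lo.le (a + b) (a + c)) ∧
      Language.IsRegular
        {w : List (Fin n × Bool) | IsGeodesicWord w ∧ lo.lt 0 (wordValue w)} := by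
  refine ⟨(inferInstance : LinearOrder (Lex (Fin n → ℤ))),
    fun a b c (h : toLex b ≤ toLex c) => add_le_add_right h (toLex a), ?_⟩
  refine Language.isRegular_of_toFinset_eq ?_
  rintro v w hvw ⟨hv, hpos⟩
  have hmem : ∀ l, l ∈ v ↔ l ∈ w := fun l => by
    rw [← List.mem_toFinset, hvw, List.mem_toFinset]
  have hw : IsGeodesicWord w := by simpa only [IsGeodesicWord, hmem] using hv
  have hsign (i : Fin n) : SignType.sign (wordValue v i) = SignType.sign (wordValue w i) := by
    rw [hv.sign_wordValue, hw.sign_wordValue]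
    simp only [hmem]
  exact ⟨hw, Pi.Lex.toLex_pos_of_sign_eq hsign hpos⟩

/-- For every positive integer `n` there is an automatic left-order on `ℤⁿ`:
a translation-invariant linear order such that the language of geodesic words
representing positive elements is regular. -/
theorem exists_automatic_left_order_on_Zn (n : ℕ) (hn : 0 < n) :
    ∃ lo : LinearOrder (Fin n → ℤ),
      (∀ a b c : Fin n → ℤ, lo.le b c → lo.le (a + b) (a + c)) ∧
      Language.IsRegular
        {w : List (Fin n × Bool) | IsGeodesicWord w ∧ lo.lt 0 (wordValue w)} :=
  exists_automatic_left_order_on_Zn_general n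
end
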